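/- arXiv:0904.3468 — 5 statements merged into one kernel-verified Lean document; each statement's English description precedes it below -/
import Mathlib

section
/- Let X be a measurable space and (P_t)_{t≥0} a family of sub-Markov kernels from X to X satisfying: P_0 is the identity kernel; the semigroup (Chapman–Kolmogorov) property P_{t+s}(x, A) = ∫_X P_s(y, A) P_t(x, dy) holds for all t, s ≥ 0, x ∈ X and measurable A ⊆ X; and for every probability measure ρ on X and every measurable A, the map s ↦ (ρP_s)(A) is measurable on [0,∞). Suppose ν is a probability measure on X and β is a real number with 0 < β < 1 such that νP_1 = β·ν. Then, with θ := −log β > 0, there exists a probability measure ν' on X such that ν'P_t = e^{−θt}·ν' for all t ≥ 0. -/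
open MeasureTheory ProbabilityTheory Set
open scoped NNReal ENNReal

/-!
Write `μ_s = νP_s`. The semigroup property and `νP_1 = e^{-θ} ν` give `μ_{s+1} = e^{-θ} μ_s`, so
`s ↦ e^{θ s} μ_s` is 1-periodic on `[0, ∞)`. Hence `m = ∫₀¹ e^{θ s} μ_s ds` satisfies
`mP_t = e^{-θ t} ∫ₜ^{t+1} e^{θ s} μ_s ds = e^{-θ t} m`. Since the kernels are sub-Markov, the mass
of `μ_s` lies between `β` and `1` for `s ≤ 1`, so `m` has finite nonzero mass and can be normalized.
-/

theorem Function.Periodic.setLIntegral_Ioc_add_eq {f : ℝ → ℝ≥0∞} {T : ℝ}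
    (hf : Function.Periodic f T) (hT : 0 < T) (t s : ℝ) :
    ∫⁻ x in Ioc t (t + T), f x = ∫⁻ x in Ioc s (s + T), f x :=
  (isAddFundamentalDomain_Ioc hT t).setLIntegral_eq (isAddFundamentalDomain_Ioc hT s) f
    fun g x => by
      obtain ⟨n, hn⟩ := AddSubgroup.mem_zmultiples_iff.1 g.2
      rw [AddSubgroup.vadd_def, vadd_eq_add, ← hn, add_comm]
      exact hf.zsmul n x

theorem apply_eq_apply_fract_of_forall_nonneg_add_one {α : Type*} {f : ℝ → α}
    (hf : ∀ x, 0 ≤ x → f (x + 1) = f x) {x : ℝ} (hx : 0 ≤ x) : f x = f (Int.fract x) := by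
  have hshift : ∀ n : ℕ, f (Int.fract x + n) = f (Int.fract x) := by
    intro n
    induction n with
    | zero => simp
    | succ n ih =>
      rw [Nat.cast_succ, ← add_assoc, hf _ (by positivity), ih]
  obtain ⟨n, hn⟩ := Int.eq_ofNat_of_zero_le (Int.floor_nonneg.2 hx)
  conv_lhs => rw [← Int.fract_add_floor x, hn]
  exact_mod_cast hshift n

theorem setLIntegral_Ioc_add_one_eq_of_forall_nonneg {f : ℝ → ℝ≥0∞}
    (hf : ∀ x, 0 ≤ x → f (x + 1) = f x) {t : ℝ} (ht : 0 ≤ t) :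
    ∫⁻ x in Ioc t (t + 1), f x = ∫⁻ x in Ioc 0 1, f x := by
  have hfract : ∀ s, 0 ≤ s →
      ∫⁻ x in Ioc s (s + 1), f x = ∫⁻ x in Ioc s (s + 1), f (Int.fract x) := fun s hs =>
    setLIntegral_congr_fun measurableSet_Ioc fun x hx =>
      apply_eq_apply_fract_of_forall_nonneg_add_one hf (hs.trans hx.1.le)
  simpa using (hfract t ht).trans <|
    (((Int.fract_periodic ℝ).comp f).setLIntegral_Ioc_add_eq one_pos t 0).trans
      (hfract 0 le_rfl).symm

theorem setLIntegral_Ioc_comp_add_right (f : ℝ → ℝ≥0∞) (a b c : ℝ) :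
    ∫⁻ x in Ioc a b, f (x + c) = ∫⁻ x in Ioc (a + c) (b + c), f x := by
  simpa using (measurePreserving_add_right volume c).setLIntegral_comp_preimage_emb
    (MeasurableEquiv.addRight c).measurableEmbedding f (Ioc (a + c) (b + c))

namespace MeasureTheory.Measure

theorem comp_apply_univ_le {α β : Type*} [MeasurableSpace α] [MeasurableSpace β]
    {κ : Kernel α β} (hκ : ∀ a, κ a univ ≤ 1) (ρ : Measure α) : (κ ∘ₘ ρ) univ ≤ ρ univ := by
  rw [bind_apply .univ κ.aemeasurable]
  exact (lintegral_mono hκ).trans_eq (by simp)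

variable {X : Type*} [MeasurableSpace X]

-- Only read at `s ≥ 0`: negative times are truncated to `0`.
noncomputable def expWeighted (θ : ℝ) (μ : ℝ≥0 → Measure X) (s : ℝ) : Measure X :=
  ENNReal.ofReal (Real.exp (θ * s)) • μ s.toNNReal

noncomputable def expAverage (θ : ℝ) (μ : ℝ≥0 → Measure X) : Measure X :=
  (volume.restrict (Ioc (0 : ℝ) 1)).bind (expWeighted θ μ)

variable {θ : ℝ} {μ : ℝ≥0 → Measure X}

theorem measurable_expWeighted (hμ : Measurable μ) : Measurable (expWeighted θ μ) :=
  measurable_of_measurable_coe _ fun _ hA =>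
    (Real.measurable_exp.comp (measurable_const_mul θ)).ennreal_ofReal.mul
      ((measurable_coe hA).comp (hμ.comp measurable_real_toNNReal))

theorem expAverage_apply (hμ : Measurable μ) {A : Set X} (hA : MeasurableSet A) :
    expAverage θ μ A = ∫⁻ s in Ioc 0 1, expWeighted θ μ s A :=
  bind_apply hA (measurable_expWeighted hμ).aemeasurable

theorem expWeighted_add_one (hper : ∀ s, μ (s + 1) = ENNReal.ofReal (Real.exp (-θ)) • μ s)
    {s : ℝ} (hs : 0 ≤ s) : expWeighted θ μ (s + 1) = expWeighted θ μ s := by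
  rw [expWeighted, expWeighted, Real.toNNReal_add hs zero_le_one, Real.toNNReal_one, hper,
    smul_smul, ← ENNReal.ofReal_mul (Real.exp_nonneg _), ← Real.exp_add]
  ring_nf

theorem comp_expWeighted {P : ℝ≥0 → Kernel X X} (hflow : ∀ s t, P t ∘ₘ μ s = μ (s + t))
    {s : ℝ} (hs : 0 ≤ s) (t : ℝ≥0) :
    P t ∘ₘ expWeighted θ μ s = ENNReal.ofReal (Real.exp (-θ * t)) • expWeighted θ μ (s + t) := by
  rw [expWeighted, expWeighted, comp_smul, hflow, Real.toNNReal_add hs t.coe_nonneg,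
    Real.toNNReal_coe, smul_smul, ← ENNReal.ofReal_mul (Real.exp_nonneg _), ← Real.exp_add]
  ring_nf

theorem comp_expAverage {P : ℝ≥0 → Kernel X X} (hμ : Measurable μ)
    (hflow : ∀ s t, P t ∘ₘ μ s = μ (s + t))
    (hper : ∀ s, μ (s + 1) = ENNReal.ofReal (Real.exp (-θ)) • μ s) (t : ℝ≥0) :
    P t ∘ₘ expAverage θ μ = ENNReal.ofReal (Real.exp (-θ * t)) • expAverage θ μ := by
  have hw := measurable_expWeighted (θ := θ) hμ
  ext A hA
  calc (P t ∘ₘ expAverage θ μ) A = ∫⁻ s in Ioc 0 1, (P t ∘ₘ expWeighted θ μ s) A := by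
        rw [expAverage, bind_bind hw.aemeasurable (P t).aemeasurable]
        exact bind_apply hA ((measurable_bind' (P t).measurable).comp hw).aemeasurable
    _ = ∫⁻ s in Ioc 0 1, ENNReal.ofReal (Real.exp (-θ * t)) * expWeighted θ μ (s + t) A :=
        setLIntegral_congr_fun measurableSet_Ioc fun s hs => by
          rw [comp_expWeighted hflow hs.1.le, smul_apply, smul_eq_mul]
    _ = ENNReal.ofReal (Real.exp (-θ * t)) * ∫⁻ s in Ioc (t : ℝ) (t + 1), expWeighted θ μ s A := by
        rw [lintegral_const_mul' _ _ ENNReal.ofReal_ne_top,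
          setLIntegral_Ioc_comp_add_right (fun s => expWeighted θ μ s A),
          zero_add, add_comm 1]
    _ = ENNReal.ofReal (Real.exp (-θ * t)) * ∫⁻ s in Ioc 0 1, expWeighted θ μ s A := by
        rw [setLIntegral_Ioc_add_one_eq_of_forall_nonneg
          (fun s hs => by rw [expWeighted_add_one hper hs]) t.coe_nonneg]
    _ = _ := by rw [smul_apply, smul_eq_mul, expAverage_apply hμ hA]

theorem expAverage_apply_univ_le (hθ : 0 ≤ θ) (hμ : Measurable μ) (h : ∀ s, μ s univ ≤ 1) :
    expAverage θ μ univ ≤ ENNReal.ofReal (Real.exp θ) := by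
  rw [expAverage_apply hμ .univ]
  calc ∫⁻ s in Ioc 0 1, expWeighted θ μ s univ
        ≤ ∫⁻ _ in Ioc (0 : ℝ) 1, ENNReal.ofReal (Real.exp θ) :=
        setLIntegral_mono measurable_const fun s hs => by
          rw [expWeighted, smul_apply, smul_eq_mul]
          calc ENNReal.ofReal (Real.exp (θ * s)) * μ s.toNNReal univ
              ≤ ENNReal.ofReal (Real.exp (θ * s)) := mul_le_of_le_one_right' (h _)
            _ ≤ ENNReal.ofReal (Real.exp θ) :=
              ENNReal.ofReal_le_ofReal (Real.exp_le_exp.2 (by nlinarith [hs.1, hs.2]))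
    _ = ENNReal.ofReal (Real.exp θ) := by simp

theorem le_expAverage_apply_univ (hθ : 0 ≤ θ) (hμ : Measurable μ) {c : ℝ≥0∞}
    (h : ∀ s ≤ 1, c ≤ μ s univ) : c ≤ expAverage θ μ univ := by
  rw [expAverage_apply hμ .univ]
  calc c = ∫⁻ _ in Ioc (0 : ℝ) 1, c := by simp
    _ ≤ ∫⁻ s in Ioc 0 1, expWeighted θ μ s univ :=
        setLIntegral_mono (measurable_coe .univ |>.comp (measurable_expWeighted hμ)) fun s hs => by
          rw [expWeighted, smul_apply, smul_eq_mul]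
          exact (h _ (Real.toNNReal_le_one.2 hs.2)).trans (le_mul_of_one_le_left' <|
            ENNReal.one_le_ofReal.2 (Real.one_le_exp (by nlinarith [hs.1])))

end MeasureTheory.Measure

theorem qsd_from_time_one_eigenmeasure_general {X : Type*} [MeasurableSpace X]
    (P : ℝ≥0 → Kernel X X)
    (hsub : ∀ t x, P t x Set.univ ≤ 1)
    (hsemi : ∀ t s : ℝ≥0, ∀ x : X, ∀ A : Set X, MeasurableSet A →
      P (t + s) x A = ∫⁻ y, P s y A ∂(P t x))
    (hmeas : ∀ ρ : Measure X, IsProbabilityMeasure ρ → ∀ A : Set X, MeasurableSet A →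
      Measurable fun s : ℝ≥0 => (ρ.bind fun x => P s x) A)
    (ν : Measure X) (hν : IsProbabilityMeasure ν)
    (β : ℝ) (hβ0 : 0 < β) (hβ1 : β < 1)
    (heig : (ν.bind fun x => P 1 x) = ENNReal.ofReal β • ν) :
    ∃ θ : ℝ, θ = -Real.log β ∧ 0 < θ ∧
      ∃ ν' : Measure X, IsProbabilityMeasure ν' ∧
        ∀ t : ℝ≥0, (ν'.bind fun x => P t x)
          = ENNReal.ofReal (Real.exp (-θ * (t : ℝ))) • ν' := by
  set θ := -Real.log β
  have hθ : 0 < θ := neg_pos.2 (Real.log_neg hβ0 hβ1)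
  have hβ : Real.exp (-θ) = β := by rw [neg_neg, Real.exp_log hβ0]
  set μ : ℝ≥0 → Measure X := fun s => P s ∘ₘ ν
  have hμ : Measurable μ := Measure.measurable_of_measurable_coe _ fun A hA => hmeas ν hν A hA
  have hP : ∀ s t, P (s + t) = P t ∘ₖ P s := fun s t => by
    ext x A hA
    rw [Kernel.comp_apply' _ _ _ hA, hsemi s t x A hA]
  have hflow : ∀ s t, P t ∘ₘ μ s = μ (s + t) := fun s t => by
    rw [Measure.comp_assoc, ← hP]
  have hper : ∀ s, μ (s + 1) = ENNReal.ofReal (Real.exp (-θ)) • μ s := fun s => by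
    rw [add_comm, ← hflow, hβ]
    exact (congrArg (P s ∘ₘ ·) heig).trans (Measure.comp_smul _)
  have hmass_le : ∀ s, μ s univ ≤ 1 := fun s =>
    (Measure.comp_apply_univ_le (hsub s) ν).trans_eq measure_univ
  have hmass_ge : ∀ s ≤ 1, ENNReal.ofReal β ≤ μ s univ := fun s hs => by
    have h1 : μ 1 univ = ENNReal.ofReal β := by simp [μ, heig]
    rw [← h1, ← add_tsub_cancel_of_le hs, ← hflow]
    exact Measure.comp_apply_univ_le (hsub _) _
  set m := Measure.expAverage θ μ
  have : IsFiniteMeasure m := ⟨(Measure.expAverage_apply_univ_le hθ.le hμ hmass_le).trans_lt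
    ENNReal.ofReal_lt_top⟩
  have : NeZero m := ⟨fun h => not_le.2 hβ0 <| by
    simpa [m, h] using Measure.le_expAverage_apply_univ hθ.le hμ hmass_ge⟩
  refine ⟨θ, rfl, hθ, (m univ)⁻¹ • m, inferInstance, fun t => ?_⟩
  rw [Measure.comp_smul, Measure.comp_expAverage hμ hflow hper, smul_comm]

/-- Lemma 3.1 of the paper (kernel-semigroup form): if `(P_t)` is a measurable
sub-Markov semigroup on `X` and `ν` is a probability measure with `νP_1 = β ν` for
some `0 < β < 1`, then with `θ = -log β > 0` there is a probability measure `ν'`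
with `ν'P_t = e^{-θ t} ν'` for all `t ≥ 0`. -/
theorem qsd_from_time_one_eigenmeasure {X : Type*} [MeasurableSpace X]
    (P : ℝ≥0 → Kernel X X)
    (hsub : ∀ t x, P t x Set.univ ≤ 1)
    (h0 : ∀ x, P 0 x = Measure.dirac x)
    (hsemi : ∀ t s : ℝ≥0, ∀ x : X, ∀ A : Set X, MeasurableSet A →
      P (t + s) x A = ∫⁻ y, P s y A ∂(P t x))
    (hmeas : ∀ ρ : Measure X, IsProbabilityMeasure ρ → ∀ A : Set X, MeasurableSet A →
      Measurable fun s : ℝ≥0 => (ρ.bind fun x => P s x) A)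
    (ν : Measure X) (hν : IsProbabilityMeasure ν)
    (β : ℝ) (hβ0 : 0 < β) (hβ1 : β < 1)
    (heig : (ν.bind fun x => P 1 x) = ENNReal.ofReal β • ν) :
    ∃ θ : ℝ, θ = -Real.log β ∧ 0 < θ ∧
      ∃ ν' : Measure X, IsProbabilityMeasure ν' ∧
        ∀ t : ℝ≥0, (ν'.bind fun x => P t x)
          = ENNReal.ofReal (Real.exp (-θ * (t : ℝ))) • ν' :=
  qsd_from_time_one_eigenmeasure_general P hsub hsemi hmeas ν hν β hβ0 hβ1 heig
end

section
/- Let X be a Polish space and φ₂ : X → ℝ a continuous function with φ₂ ≥ 1 such that φ₂^{-1}([0,u]) is compact for every u ≥ 0. Let v be a continuous nonnegative linear functional on C_b(X), and assume there exists K > 0 such that v(ψ) ≤ K for every ψ ∈ C_b(X) with 0 ≤ ψ ≤ φ₂ pointwise. Then there exists a finite nonnegative Borel measure ν on X such that v(f) = ∫_X f dν for every f ∈ C_b(X). -/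
/-!
Sublevel sets of `φ₂` are compact neighbourhoods, so `X` is locally compact and the
Riesz–Markov–Kakutani theorem represents `v` on compactly supported functions by a measure `ν`.
The cutoffs `χₙ`, equal to `1` on `{φ₂ ≤ n}` and to `0` on `{φ₂ ≥ n + 1}`, satisfy
`n (1 - χₙ) ≤ φ₂`, so the tightness bound gives `|v f - v (f χₙ)| ≤ ‖f‖ K / n`. They also show
`ν {φ₂ ≤ n} ≤ v χₙ ≤ v 1`, so `ν` is finite and `∫ f χₙ dν → ∫ f dν` by dominated convergence;
since `v (f χₙ) = ∫ f χₙ dν`, the two limits agree.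
-/

open MeasureTheory BoundedContinuousFunction CompactlySupportedContinuousMap Filter Topology Set
open scoped CompactlySupported

section

variable {X : Type*} [TopologicalSpace X]

theorem WeaklyLocallyCompactSpace.of_isCompact_sublevel {φ : X → ℝ} (hφ : Continuous φ)
    (hcomp : ∀ u, IsCompact {x | φ x ≤ u}) : WeaklyLocallyCompactSpace X :=
  ⟨fun x => ⟨{y | φ y ≤ φ x + 1}, hcomp (φ x + 1), by
    filter_upwards [(isOpen_lt hφ continuous_const).mem_nhds (lt_add_one (φ x))] with y hy
    exact hy.le⟩⟩

noncomputable def CompactlySupportedContinuousMap.toBoundedContinuousFunctionLinearMap :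
    C_c(X, ℝ) →ₗ[ℝ] X →ᵇ ℝ where
  toFun f := f.toBoundedContinuousFunction
  map_add' _ _ := rfl
  map_smul' _ _ := rfl

section Cutoff

variable {φ : X → ℝ} (hφ : Continuous φ) (hcomp : ∀ u, IsCompact {x | φ x ≤ u})

noncomputable def sublevelCutoff (u : ℝ) : C_c(X, ℝ) where
  toFun x := min 1 (max 0 (u + 1 - φ x))
  continuous_toFun := by fun_prop
  hasCompactSupport' := HasCompactSupport.intro' (hcomp (u + 1))
    (isClosed_le hφ continuous_const) fun x hx => by
      simp only [mem_ofPred_eq, not_le] at hx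
      simp [max_eq_left (by linarith : u + 1 - φ x ≤ 0)]

theorem sublevelCutoff_nonneg (u : ℝ) (x : X) : 0 ≤ sublevelCutoff hφ hcomp u x :=
  le_min zero_le_one (le_max_left _ _)

theorem sublevelCutoff_le_one (u : ℝ) (x : X) : sublevelCutoff hφ hcomp u x ≤ 1 :=
  min_le_left _ _

theorem sublevelCutoff_eq_one {u : ℝ} {x : X} (hx : φ x ≤ u) :
    sublevelCutoff hφ hcomp u x = 1 :=
  min_eq_left (le_max_of_le_right (by linarith))

theorem mul_one_sub_sublevelCutoff_le {u : ℝ} (hu : 0 ≤ u) {x : X} (hφx : 0 ≤ φ x) :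
    u * (1 - sublevelCutoff hφ hcomp u x) ≤ φ x := by
  rcases le_or_gt (φ x) u with hx | hx
  · simp [sublevelCutoff_eq_one hφ hcomp hx, hφx]
  · nlinarith [sublevelCutoff_nonneg hφ hcomp u x]

theorem tendsto_sublevelCutoff (x : X) :
    Tendsto (fun n : ℕ => sublevelCutoff hφ hcomp n x) atTop (𝓝 1) :=
  tendsto_const_nhds.congr' <| (eventually_ge_atTop ⌈φ x⌉₊).mono fun _ hn =>
    (sublevelCutoff_eq_one hφ hcomp ((Nat.le_ceil _).trans (Nat.cast_le.2 hn))).symm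

theorem tendsto_integral_smul_sublevelCutoff [MeasurableSpace X] [OpensMeasurableSpace X]
    (μ : Measure X) [IsFiniteMeasure μ] (f : X →ᵇ ℝ) :
    Tendsto (fun n : ℕ => ∫ x, (f • sublevelCutoff hφ hcomp n) x ∂μ) atTop
      (𝓝 (∫ x, f x ∂μ)) := by
  refine tendsto_integral_of_dominated_convergence (fun _ => ‖f‖)
    (fun n => (f • sublevelCutoff hφ hcomp n).continuous.aestronglyMeasurable)
    (integrable_const _) (fun n => ae_of_all _ fun x => ?_) (ae_of_all _ fun x => ?_)
  · rw [smulc_apply, smul_eq_mul, norm_mul,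
      Real.norm_of_nonneg (sublevelCutoff_nonneg hφ hcomp _ x)]
    exact (mul_le_of_le_one_right (norm_nonneg _) (sublevelCutoff_le_one hφ hcomp _ x)).trans
      (f.norm_coe_le_norm x)
  · simpa using (tendsto_sublevelCutoff hφ hcomp x).const_mul (f x)

end Cutoff

section Functional

variable (v : (X →ᵇ ℝ) →L[ℝ] ℝ)

theorem ContinuousLinearMap.apply_mono_of_nonneg
    (hvpos : ∀ f : X →ᵇ ℝ, (∀ x, 0 ≤ f x) → 0 ≤ v f)
    {g h : X →ᵇ ℝ} (hgh : ∀ x, g x ≤ h x) : v g ≤ v h := by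
  have := hvpos (h - g) fun x => sub_nonneg.2 (hgh x)
  rwa [map_sub, sub_nonneg] at this

theorem ContinuousLinearMap.abs_apply_le_of_abs_le
    (hvpos : ∀ f : X →ᵇ ℝ, (∀ x, 0 ≤ f x) → 0 ≤ v f)
    {g h : X →ᵇ ℝ} (hgh : ∀ x, |g x| ≤ h x) : |v g| ≤ v h := by
  have hneg := v.apply_mono_of_nonneg hvpos (g := -h) fun x => neg_le_of_abs_le (hgh x)
  rw [map_neg] at hneg
  exact abs_le.2 ⟨hneg, v.apply_mono_of_nonneg hvpos fun x => le_of_abs_le (hgh x)⟩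

noncomputable def ContinuousLinearMap.restrictCompactlySupported
    (hvpos : ∀ f : X →ᵇ ℝ, (∀ x, 0 ≤ f x) → 0 ≤ v f) : C_c(X, ℝ) →ₚ[ℝ] ℝ :=
  PositiveLinearMap.mk₀ (v.toLinearMap ∘ₗ toBoundedContinuousFunctionLinearMap) fun _ hf =>
    hvpos _ (CompactlySupportedContinuousMap.le_def.1 hf)

variable {φ : X → ℝ} (hφ : Continuous φ) (hcomp : ∀ u, IsCompact {x | φ x ≤ u})

theorem ContinuousLinearMap.abs_sub_apply_smul_sublevelCutoff_le
    (hvpos : ∀ f : X →ᵇ ℝ, (∀ x, 0 ≤ f x) → 0 ≤ v f) (hφ0 : ∀ x, 0 ≤ φ x) {K : ℝ}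
    (hbound : ∀ ψ : X →ᵇ ℝ, (∀ x, 0 ≤ ψ x) → (∀ x, ψ x ≤ φ x) → v ψ ≤ K)
    (f : X →ᵇ ℝ) {u : ℝ} (hu : 0 < u) :
    |v f - v (f • sublevelCutoff hφ hcomp u).toBoundedContinuousFunction| ≤ ‖f‖ * K / u := by
  set χ := (sublevelCutoff hφ hcomp u).toBoundedContinuousFunction
  have hχ : ∀ x, 0 ≤ 1 - χ x ∧ u * (1 - χ x) ≤ φ x := fun x =>
    ⟨sub_nonneg.2 (sublevelCutoff_le_one hφ hcomp u x),
      mul_one_sub_sublevelCutoff_le hφ hcomp hu.le (hφ0 x)⟩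
  have htail : u * v (1 - χ) ≤ K := by
    rw [← smul_eq_mul, ← map_smul]
    exact hbound _ (fun x => mul_nonneg hu.le (hχ x).1) fun x => (hχ x).2
  have hdiff :
      f - (f • sublevelCutoff hφ hcomp u).toBoundedContinuousFunction = f * (1 - χ) := by
    ext x; simp [χ, mul_sub]
  calc |v f - v (f • sublevelCutoff hφ hcomp u).toBoundedContinuousFunction|
      ≤ v (‖f‖ • (1 - χ)) := by
        rw [← map_sub, hdiff]
        refine v.abs_apply_le_of_abs_le hvpos fun x => ?_
        simp only [BoundedContinuousFunction.coe_mul, BoundedContinuousFunction.coe_smul,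
          BoundedContinuousFunction.coe_sub, BoundedContinuousFunction.coe_one, Pi.mul_apply,
          Pi.sub_apply, Pi.one_apply, smul_eq_mul, abs_mul, abs_of_nonneg (hχ x).1,
          ← Real.norm_eq_abs]
        exact mul_le_mul_of_nonneg_right (f.norm_coe_le_norm x) (hχ x).1
    _ = ‖f‖ * v (1 - χ) := by rw [map_smul, smul_eq_mul]
    _ ≤ ‖f‖ * K / u := by
        rw [mul_div_assoc]
        exact mul_le_mul_of_nonneg_left ((le_div_iff₀ hu).2 (by linarith)) (norm_nonneg f)

theorem ContinuousLinearMap.tendsto_apply_smul_sublevelCutoff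
    (hvpos : ∀ f : X →ᵇ ℝ, (∀ x, 0 ≤ f x) → 0 ≤ v f) (hφ0 : ∀ x, 0 ≤ φ x) {K : ℝ}
    (hbound : ∀ ψ : X →ᵇ ℝ, (∀ x, 0 ≤ ψ x) → (∀ x, ψ x ≤ φ x) → v ψ ≤ K) (f : X →ᵇ ℝ) :
    Tendsto (fun n : ℕ => v (f • sublevelCutoff hφ hcomp n).toBoundedContinuousFunction) atTop
      (𝓝 (v f)) := by
  refine tendsto_iff_norm_sub_tendsto_zero.2 <|
    squeeze_zero' (.of_forall fun _ => norm_nonneg _) ((eventually_gt_atTop 0).mono fun n hn => ?_)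
      (tendsto_const_div_atTop_nhds_zero_nat (‖f‖ * K))
  rw [Real.norm_eq_abs, abs_sub_comm]
  exact v.abs_sub_apply_smul_sublevelCutoff_le hφ hcomp hvpos hφ0 hbound f (Nat.cast_pos.2 hn)

end Functional

section RieszMarkovKakutani

variable [T2Space X] [LocallyCompactSpace X] [MeasurableSpace X] [BorelSpace X]
  (v : (X →ᵇ ℝ) →L[ℝ] ℝ) (hvpos : ∀ f : X →ᵇ ℝ, (∀ x, 0 ≤ f x) → 0 ≤ v f)

theorem isFiniteMeasure_rieszMeasure_restrictCompactlySupported {φ : X → ℝ}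
    (hφ : Continuous φ) (hcomp : ∀ u, IsCompact {x | φ x ≤ u}) :
    IsFiniteMeasure (RealRMK.rieszMeasure (v.restrictCompactlySupported hvpos)) := by
  have hunion : (⋃ n : ℕ, {x | φ x ≤ n}) = univ :=
    iUnion_eq_univ_iff.2 fun x => ⟨⌈φ x⌉₊, Nat.le_ceil (φ x)⟩
  have hmono : Monotone fun n : ℕ => {x | φ x ≤ n} := fun _ _ hmn _ hx => by
    simp only [mem_ofPred_eq] at hx ⊢
    exact hx.trans (Nat.cast_le.2 hmn)
  refine ⟨lt_of_le_of_lt ?_ (ENNReal.ofReal_lt_top (r := v 1))⟩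
  rw [← hunion, hmono.measure_iUnion]
  refine iSup_le fun n => (RealRMK.rieszMeasure_le_of_eq_one _ (sublevelCutoff_nonneg hφ hcomp n)
    (hcomp n) fun x hx => sublevelCutoff_eq_one hφ hcomp hx).trans ?_
  exact ENNReal.ofReal_le_ofReal <|
    v.apply_mono_of_nonneg hvpos fun x => sublevelCutoff_le_one hφ hcomp n x

end RieszMarkovKakutani

end

theorem functional_represented_by_measure_general {X : Type*} [TopologicalSpace X]
    [PolishSpace X] [MeasurableSpace X] [BorelSpace X]
    (φ₂ : X → ℝ) (hφcont : Continuous φ₂) (hφge : ∀ x, 1 ≤ φ₂ x)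
    (hφcomp : ∀ u : ℝ, 0 ≤ u → IsCompact (φ₂ ⁻¹' Set.Icc 0 u))
    (v : (X →ᵇ ℝ) →L[ℝ] ℝ)
    (hvpos : ∀ f : X →ᵇ ℝ, (∀ x, 0 ≤ f x) → 0 ≤ v f)
    (K : ℝ)
    (hbound : ∀ ψ : X →ᵇ ℝ, (∀ x, 0 ≤ ψ x) → (∀ x, ψ x ≤ φ₂ x) → v ψ ≤ K) :
    ∃ ν : Measure X, IsFiniteMeasure ν ∧ ∀ f : X →ᵇ ℝ, v f = ∫ x, f x ∂ν := by
  have hφ0 : ∀ x, 0 ≤ φ₂ x := fun x => zero_le_one.trans (hφge x)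
  have hsub : ∀ u, IsCompact {x | φ₂ x ≤ u} := by
    intro u
    rcases lt_or_ge u 0 with hu | hu
    · convert isCompact_empty
      exact eq_empty_of_forall_notMem fun x hx => (hφ0 x).not_gt (lt_of_le_of_lt hx hu)
    · convert hφcomp u hu using 1
      ext x
      simp [hφ0 x]
  have : WeaklyLocallyCompactSpace X := .of_isCompact_sublevel hφcont hsub
  let ν := RealRMK.rieszMeasure (v.restrictCompactlySupported hvpos)
  have hfin : IsFiniteMeasure ν :=
    isFiniteMeasure_rieszMeasure_restrictCompactlySupported v hvpos hφcont hsub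
  refine ⟨ν, hfin, fun f => tendsto_nhds_unique
    (v.tendsto_apply_smul_sublevelCutoff hφcont hsub hvpos hφ0 hbound f) ?_⟩
  exact (tendsto_integral_smul_sublevelCutoff hφcont hsub ν f).congr fun n =>
    RealRMK.integral_rieszMeasure _ _

/-- Lemma 4.1 of the paper: on a Polish space `X`, a continuous nonnegative linear
functional `v` on `C_b(X)` which is uniformly bounded on the test functions
`0 ≤ ψ ≤ φ₂` — where `φ₂ ≥ 1` is continuous with compact sublevel sets — is
represented by a finite nonnegative Borel measure. -/
theorem functional_represented_by_measure {X : Type*} [TopologicalSpace X]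
    [PolishSpace X] [MeasurableSpace X] [BorelSpace X]
    (φ₂ : X → ℝ) (hφcont : Continuous φ₂) (hφge : ∀ x, 1 ≤ φ₂ x)
    (hφcomp : ∀ u : ℝ, 0 ≤ u → IsCompact (φ₂ ⁻¹' Set.Icc 0 u))
    (v : (X →ᵇ ℝ) →L[ℝ] ℝ)
    (hvpos : ∀ f : X →ᵇ ℝ, (∀ x, 0 ≤ f x) → 0 ≤ v f)
    (K : ℝ) (hK : 0 < K)
    (hbound : ∀ ψ : X →ᵇ ℝ, (∀ x, 0 ≤ ψ x) → (∀ x, ψ x ≤ φ₂ x) → v ψ ≤ K) :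
    ∃ ν : Measure X, IsFiniteMeasure ν ∧ ∀ f : X →ᵇ ℝ, v f = ∫ x, f x ∂ν :=
  functional_represented_by_measure_general φ₂ hφcont hφge hφcomp v hvpos K hbound
end

section
/- Let T be a type and η : T → ℕ a finitely supported function which is not identically zero; let S be its support and ‖η‖ = ∑_{y∈S} η(y). Let a > 0 be real, and let b, m, λ : T → ℝ be nonnegative functions and B*, λ* real numbers with 0 ≤ λ* such that b(y) + m(y) ≤ B* and λ(y) ≥ λ* for every y ∈ S. Then ∑_{y∈S} η(y)·(b(y)+m(y))·(e^{a(‖η‖+1)} − e^{a‖η‖}) + ∑_{y∈S} η(y)·λ(y)·((if ‖η‖ ≥ 2 then e^{a(‖η‖−1)} else 0) − e^{a‖η‖}) ≤ (B*·(e^{a} − 1) + λ*·(e^{−a} − 1))·‖η‖·e^{a‖η‖}. -/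
/-- Lemma 4.4 of the paper (explicit form): for a nonzero finitely supported
configuration `η : T →₀ ℕ` with total mass `N = ‖η‖`, rates bounded by
`b y + m y ≤ B*` and `λ y ≥ λ* ≥ 0` on the support, and `a > 0`,
`L φ₂^a (η) ≤ (B*(e^a - 1) + λ*(e^{-a} - 1)) N e^{aN}`. -/
theorem generator_bound_exp {T : Type*} (η : T →₀ ℕ) (hη : η ≠ 0)
    (a : ℝ) (ha : 0 < a)
    (b m lam : T → ℝ)
    (hb : ∀ y, 0 ≤ b y) (hm : ∀ y, 0 ≤ m y) (hlam : ∀ y, 0 ≤ lam y)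
    (Bstar lamstar : ℝ) (hlamstar : 0 ≤ lamstar)
    (hB : ∀ y ∈ η.support, b y + m y ≤ Bstar)
    (hl : ∀ y ∈ η.support, lamstar ≤ lam y) :
    ∀ N : ℝ, N = ∑ y ∈ η.support, (η y : ℝ) →
      (∑ y ∈ η.support, (η y : ℝ) * (b y + m y)
          * (Real.exp (a * (N + 1)) - Real.exp (a * N)))
      + (∑ y ∈ η.support, (η y : ℝ) * lam y
          * ((if 2 ≤ N then Real.exp (a * (N - 1)) else 0) - Real.exp (a * N)))
      ≤ (Bstar * (Real.exp a - 1) + lamstar * (Real.exp (-a) - 1))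
          * N * Real.exp (a * N) := by
  intro N hN
  set E := Real.exp (a * N) with hEdef
  have hE : 0 < E := Real.exp_pos _
  have h1 : Real.exp (a * (N + 1)) = E * Real.exp a := by
    rw [hEdef, ← Real.exp_add]; ring_nf
  have h2 : Real.exp (a * (N - 1)) = E * Real.exp (-a) := by
    rw [hEdef, ← Real.exp_add]; ring_nf
  have hea : 1 ≤ Real.exp a := Real.one_le_exp ha.le
  have hena : Real.exp (-a) ≤ 1 := Real.exp_le_one_iff.mpr (by linarith)
  have hene : 0 < Real.exp (-a) := Real.exp_pos _
  set D : ℝ := (if 2 ≤ N then Real.exp (a * (N - 1)) else 0) with hDdef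
  have hDle : D ≤ E * Real.exp (-a) := by
    rw [hDdef]
    split_ifs
    · rw [h2]
    · positivity
  have hDE : D - E ≤ 0 := by nlinarith
  have key : ∀ y ∈ η.support,
      (η y : ℝ) * (b y + m y) * (Real.exp (a * (N + 1)) - E)
        + (η y : ℝ) * lam y * (D - E)
      ≤ (η y : ℝ) * ((Bstar * (Real.exp a - 1) + lamstar * (Real.exp (-a) - 1)) * E) := by
    intro y hy
    have hη0 : (0:ℝ) ≤ (η y : ℝ) := Nat.cast_nonneg _
    have hbm : 0 ≤ b y + m y := add_nonneg (hb y) (hm y)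
    have t1 : (η y : ℝ) * (b y + m y) * (Real.exp (a * (N + 1)) - E)
        ≤ (η y : ℝ) * (Bstar * ((Real.exp a - 1) * E)) := by
      rw [h1]
      have : Real.exp a * E - E = (Real.exp a - 1) * E := by ring
      have hBy := hB y hy
      nlinarith [mul_le_mul_of_nonneg_right hBy (mul_nonneg (sub_nonneg.2 hea) hE.le),
        mul_le_mul_of_nonneg_left
          (mul_le_mul_of_nonneg_right hBy (mul_nonneg (sub_nonneg.2 hea) hE.le)) hη0]
    have t2 : (η y : ℝ) * lam y * (D - E)
        ≤ (η y : ℝ) * (lamstar * ((Real.exp (-a) - 1) * E)) := by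
      have hly := hl y hy
      have s1 : lam y * (D - E) ≤ lamstar * (D - E) :=
        mul_le_mul_of_nonpos_right hly hDE
      have s2 : lamstar * (D - E) ≤ lamstar * ((Real.exp (-a) - 1) * E) := by
        apply mul_le_mul_of_nonneg_left _ hlamstar
        nlinarith
      have := mul_le_mul_of_nonneg_left (s1.trans s2) hη0
      linarith [this, (by ring : (η y : ℝ) * (lam y * (D - E)) = (η y : ℝ) * lam y * (D - E))]
    nlinarith [t1, t2]
  calc (∑ y ∈ η.support, (η y : ℝ) * (b y + m y) * (Real.exp (a * (N + 1)) - E))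
      + (∑ y ∈ η.support, (η y : ℝ) * lam y * (D - E))
      = ∑ y ∈ η.support, ((η y : ℝ) * (b y + m y) * (Real.exp (a * (N + 1)) - E)
          + (η y : ℝ) * lam y * (D - E)) := by rw [Finset.sum_add_distrib]
    _ ≤ ∑ y ∈ η.support, (η y : ℝ) * ((Bstar * (Real.exp a - 1) + lamstar * (Real.exp (-a) - 1)) * E) :=
        Finset.sum_le_sum key
    _ = (Bstar * (Real.exp a - 1) + lamstar * (Real.exp (-a) - 1)) * N * E := by
        rw [← Finset.sum_mul, ← hN]; ring
end

section
/- Let B and λ be real numbers with 0 < B < λ, and define f : ℝ → ℝ by f(a) = λ·(1 − e^{−a}) + B·(1 − e^{a}). Then f(0) = 0, f(log(λ/B)) = 0, and f(a) > 0 for every a ∈ (0, log(λ/B)). Moreover, if a : [0,∞) → ℝ is differentiable with a'(t) = f(a(t)) for all t ≥ 0 and a(0) = a₀ ∈ (0, log(λ/B)), then a(t) ∈ (0, log(λ/B)) for all t ≥ 0, a is strictly increasing, and a(t) → log(λ/B) as t → ∞. -/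
open Real Set Filter

private lemma ode_prod_form (B lam : ℝ) (hB : 0 < B)
    (f : ℝ → ℝ)
    (hf : ∀ a, f a = lam * (1 - Real.exp (-a)) + B * (1 - Real.exp a)) (x : ℝ) :
    f x = B * Real.exp (-x) * (Real.exp x - 1) * (lam / B - Real.exp x) := by
  rw [hf, Real.exp_neg]
  have h : Real.exp x ≠ 0 := (Real.exp_pos x).ne'
  field_simp
  ring

/-- Lemma 4.5 of the paper: for `0 < B < λ`, the ODE `da/dt = λ(1 - e^{-a}) + B(1 - e^a)`
has fixed points `0` and `log(λ/B)`, the right-hand side is positive on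
`(0, log(λ/B))`, and any solution started in `(0, log(λ/B))` stays there, is
strictly increasing on `[0,∞)`, and converges to `log(λ/B)`. -/
theorem ode_lemma (B lam : ℝ) (hB : 0 < B) (hBlam : B < lam)
    (f : ℝ → ℝ)
    (hf : ∀ a, f a = lam * (1 - Real.exp (-a)) + B * (1 - Real.exp a)) :
    f 0 = 0 ∧ f (Real.log (lam / B)) = 0 ∧
    (∀ a ∈ Set.Ioo (0 : ℝ) (Real.log (lam / B)), 0 < f a) ∧
    ∀ a : ℝ → ℝ, (∀ t : ℝ, 0 ≤ t → HasDerivAt a (f (a t)) t) →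
      a 0 ∈ Set.Ioo (0 : ℝ) (Real.log (lam / B)) →
      (∀ t : ℝ, 0 ≤ t → a t ∈ Set.Ioo (0 : ℝ) (Real.log (lam / B))) ∧
      StrictMonoOn a (Set.Ici (0 : ℝ)) ∧
      Filter.Tendsto a Filter.atTop (nhds (Real.log (lam / B))) := by
  have hlam : 0 < lam := hB.trans hBlam
  have hdivpos : 0 < lam / B := div_pos hlam hB
  set L : ℝ := Real.log (lam / B) with hLdef
  have hL : 0 < L := Real.log_pos ((one_lt_div hB).2 hBlam)
  have hexpL : Real.exp L = lam / B := Real.exp_log hdivpos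
  have hprod : ∀ x, f x = B * Real.exp (-x) * (Real.exp x - 1) * (lam / B - Real.exp x) :=
    ode_prod_form B lam hB f hf
  -- positivity on (0, L)
  have hpos : ∀ x ∈ Set.Ioo (0 : ℝ) L, 0 < f x := by
    intro x hx
    rw [hprod]
    have h1 : (1 : ℝ) < Real.exp x := by
      simpa using Real.exp_lt_exp.2 hx.1
    have h2 : Real.exp x < lam / B := by
      rw [← hexpL]; exact Real.exp_lt_exp.2 hx.2
    have h3 : 0 < Real.exp (-x) := Real.exp_pos (-x)
    apply mul_pos (mul_pos (mul_pos hB h3) (by linarith)) (by linarith)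
  -- f ≤ lam * (L - x) for x ≤ L
  have hfle : ∀ x, x ≤ L → f x ≤ lam * (L - x) := by
    intro x hx
    rw [hf]
    have hexle : Real.exp x ≤ lam / B := by
      rw [← hexpL]; exact Real.exp_le_exp.2 hx
    have htang : Real.exp L * (1 + x - L) ≤ Real.exp x := by
      have := Real.add_one_le_exp (x - L)
      calc Real.exp L * (1 + x - L) = Real.exp L * ((x - L) + 1) := by ring
        _ ≤ Real.exp L * Real.exp (x - L) := by
            exact mul_le_mul_of_nonneg_left this (Real.exp_pos L).le
        _ = Real.exp x := by rw [← Real.exp_add]; congr 1; ring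
    rw [hexpL] at htang
    have hBeL : B * (lam / B) = lam := by field_simp
    have hexppos := Real.exp_pos (-x)
    -- lam + B - lam e^{-x} - B e^x ≤ lam (L - x)
    -- first: B ≤ lam * e^{-x}
    have h1 : B * Real.exp x ≤ lam := by
      calc B * Real.exp x ≤ B * (lam / B) := mul_le_mul_of_nonneg_left hexle hB.le
        _ = lam := hBeL
    have h2 : B ≤ lam * Real.exp (-x) := by
      have hxe : Real.exp x * Real.exp (-x) = 1 := by rw [← Real.exp_add]; simp
      nlinarith [mul_le_mul_of_nonneg_right h1 hexppos.le]
    have h3 : lam * (1 + x - L) ≤ B * Real.exp x := by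
      calc lam * (1 + x - L) = B * ((lam / B) * (1 + x - L)) := by field_simp
        _ ≤ B * Real.exp x := mul_le_mul_of_nonneg_left htang hB.le
    nlinarith
  -- f ≥ 0 on [0, L]
  have hfnn : ∀ x, 0 ≤ x → x ≤ L → 0 ≤ f x := by
    intro x hx0 hxL
    rcases eq_or_lt_of_le hx0 with h | h
    · rw [hprod, ← h]; simp
    rcases eq_or_lt_of_le hxL with h' | h'
    · rw [hprod, h', hexpL]; simp
    · exact (hpos x ⟨h, h'⟩).le
  have hf0 : f 0 = 0 := by rw [hf]; simp
  have hfL : f L = 0 := by rw [hprod, hexpL]; ring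
  refine ⟨hf0, hfL, hpos, ?_⟩
  intro a ha ha0
  -- invariance
  have hstay : ∀ t : ℝ, 0 ≤ t → a t ∈ Set.Ioo (0 : ℝ) L := by
    by_contra hcon
    push_neg at hcon
    obtain ⟨T, hT0, hTout⟩ := hcon
    set s : Set ℝ := {t | t ∈ Set.Icc 0 T ∧ a t ∉ Set.Ioo (0 : ℝ) L} with hsdef
    have hsne : s.Nonempty := ⟨T, ⟨hT0, le_refl T⟩, hTout⟩
    have hsbdd : BddBelow s := ⟨0, fun t ht => ht.1.1⟩
    set t₀ : ℝ := sInf s with ht₀def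
    have ht₀0 : 0 ≤ t₀ := le_csInf hsne (fun t ht => ht.1.1)
    have ht₀T : t₀ ≤ T := csInf_le hsbdd ⟨⟨hT0, le_refl T⟩, hTout⟩
    -- a t₀ ∉ Ioo 0 L
    have ht₀out : a t₀ ∉ Set.Ioo (0 : ℝ) L := by
      intro hmem
      have hcont : ContinuousAt a t₀ := (ha t₀ ht₀0).continuousAt
      have hnhds : a ⁻¹' (Set.Ioo (0 : ℝ) L) ∈ nhds t₀ :=
        hcont.preimage_mem_nhds (isOpen_Ioo.mem_nhds hmem)
      obtain ⟨ε, hε, hball⟩ := Metric.mem_nhds_iff.1 hnhds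
      obtain ⟨u, hu, hult⟩ := Real.lt_sInf_add_pos hsne hε
      have hut₀ : t₀ ≤ u := csInf_le hsbdd hu
      have : u ∈ Metric.ball t₀ ε := by
        rw [Metric.mem_ball, Real.dist_eq, abs_of_nonneg (by linarith)]
        linarith
      exact hu.2 (hball this)
    have ht₀pos : 0 < t₀ := by
      rcases eq_or_lt_of_le ht₀0 with h | h
      · exact absurd (show a t₀ ∈ Set.Ioo (0:ℝ) L by rw [← h]; exact ha0) ht₀out
      · exact h
    -- points strictly before t₀ are inside
    have hbefore : ∀ u, 0 ≤ u → u < t₀ → a u ∈ Set.Ioo (0 : ℝ) L := by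
      intro u hu0 hut₀
      by_contra hout
      exact absurd (csInf_le hsbdd ⟨⟨hu0, le_of_lt (lt_of_lt_of_le hut₀ ht₀T)⟩, hout⟩)
        (not_le.2 hut₀)
    -- a t₀ ∈ Icc 0 L by limits from the left
    have htend : Filter.Tendsto a (nhdsWithin t₀ (Set.Iio t₀)) (nhds (a t₀)) :=
      (ha t₀ ht₀0).continuousAt.continuousWithinAt
    have hev : ∀ᶠ u in nhdsWithin t₀ (Set.Iio t₀), a u ∈ Set.Ioo (0 : ℝ) L := by
      filter_upwards [eventually_mem_nhdsWithin,
        nhdsWithin_le_nhds (eventually_gt_nhds ht₀pos)] with u hu1 hu2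
      exact hbefore u hu2.le hu1
    have ht₀Icc : a t₀ ∈ Set.Icc (0 : ℝ) L := by
      constructor
      · exact ge_of_tendsto htend (hev.mono fun u hu => hu.1.le)
      · exact le_of_tendsto htend (hev.mono fun u hu => hu.2.le)
    have haIcc : ∀ u ∈ Set.Icc (0:ℝ) t₀, a u ∈ Set.Icc (0:ℝ) L := by
      intro u hu
      rcases eq_or_lt_of_le hu.2 with h | h
      · rwa [h]
      · exact Set.Ioo_subset_Icc_self (hbefore u hu.1 h)
    have hcontOn : ContinuousOn a (Set.Icc 0 t₀) :=
      fun u hu => (ha u hu.1).continuousAt.continuousWithinAt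
    rcases (Set.mem_Icc.1 ht₀Icc).1.eq_or_lt with h0 | h0
    · -- a t₀ = 0 : contradiction with monotonicity of a on [0, t₀]
      have hmono : MonotoneOn a (Set.Icc 0 t₀) := by
        apply monotoneOn_of_deriv_nonneg (convex_Icc 0 t₀) hcontOn
        · intro u hu
          rw [interior_Icc] at hu
          exact ((ha u hu.1.le).differentiableAt).differentiableWithinAt
        · intro u hu
          rw [interior_Icc] at hu
          rw [(ha u hu.1.le).deriv]
          have := haIcc u ⟨hu.1.le, hu.2.le⟩
          exact hfnn _ this.1 this.2
      have := hmono (Set.left_mem_Icc.2 ht₀pos.le) (Set.right_mem_Icc.2 ht₀pos.le) ht₀pos.le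
      rw [← h0] at this
      exact absurd this (not_le.2 ha0.1)
    · -- a t₀ = L (since a t₀ ∈ Icc \ Ioo with a t₀ > 0)
      have haL : a t₀ = L := by
        rcases (Set.mem_Icc.1 ht₀Icc).2.lt_or_eq with h | h
        · exact absurd ⟨h0, h⟩ ht₀out
        · exact h
      -- w t = (L - a t) * exp (lam * t) is monotone on [0, t₀]
      set w : ℝ → ℝ := fun t => (L - a t) * Real.exp (lam * t) with hwdef
      have hwderiv : ∀ u, 0 ≤ u → HasDerivAt w
          ((-(f (a u))) * Real.exp (lam * u) + (L - a u) * (Real.exp (lam * u) * lam)) u := by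
        intro u hu
        have h1 : HasDerivAt (fun t => L - a t) (-(f (a u))) u := (ha u hu).const_sub L
        have h2 : HasDerivAt (fun t : ℝ => Real.exp (lam * t)) (Real.exp (lam * u) * lam) u := by
          have : HasDerivAt (fun t : ℝ => lam * t) lam u := by
            simpa using (hasDerivAt_id u).const_mul lam
          exact this.exp
        exact h1.mul h2
      have hwmono : MonotoneOn w (Set.Icc 0 t₀) := by
        apply monotoneOn_of_deriv_nonneg (convex_Icc 0 t₀)
        · intro u hu
          exact (hwderiv u hu.1).continuousAt.continuousWithinAt
        · intro u hu
          rw [interior_Icc] at hu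
          exact ((hwderiv u hu.1.le).differentiableAt).differentiableWithinAt
        · intro u hu
          rw [interior_Icc] at hu
          rw [(hwderiv u hu.1.le).deriv]
          have hmem := haIcc u ⟨hu.1.le, hu.2.le⟩
          have hle := hfle (a u) hmem.2
          have hexp := (Real.exp_pos (lam * u)).le
          nlinarith
      have hw0 : 0 < w 0 := by
        simp only [hwdef]
        simp only [mul_zero, Real.exp_zero, mul_one]
        linarith [ha0.2]
      have hwt₀ : w t₀ = 0 := by
        simp only [hwdef, haL, sub_self, zero_mul]
      have := hwmono (Set.left_mem_Icc.2 ht₀pos.le) (Set.right_mem_Icc.2 ht₀pos.le) ht₀pos.le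
      rw [hwt₀] at this
      linarith
  -- strict monotonicity
  have hmono : StrictMonoOn a (Set.Ici (0 : ℝ)) := by
    apply strictMonoOn_of_deriv_pos (convex_Ici 0)
    · intro u hu
      exact (ha u hu).continuousAt.continuousWithinAt
    · intro u hu
      rw [interior_Ici] at hu
      rw [(ha u hu.le).deriv]
      exact hpos _ (hstay u hu.le)
  refine ⟨hstay, hmono, ?_⟩
  -- convergence
  set b : ℝ → ℝ := fun t => a (max t 0) with hbdef
  have hbmono : Monotone b := by
    intro u v huv
    exact hmono.monotoneOn (le_max_right u 0) (le_max_right v 0) (max_le_max huv le_rfl)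
  have hbbdd : BddAbove (Set.range b) := by
    refine ⟨L, ?_⟩
    rintro x ⟨t, rfl⟩
    exact (hstay _ (le_max_right t 0)).2.le
  have hbtend : Filter.Tendsto b Filter.atTop (nhds (⨆ t, b t)) :=
    tendsto_atTop_ciSup hbmono hbbdd
  set l : ℝ := ⨆ t, b t with hldef
  have hble : ∀ t, b t ≤ l := fun t => le_ciSup hbbdd t
  have hb0 : b 0 = a 0 := by simp [hbdef]
  have hl0 : 0 < l := lt_of_lt_of_le ha0.1 (hb0 ▸ hble 0)
  have hlL : l ≤ L := ciSup_le (fun t => (hstay _ (le_max_right t 0)).2.le)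
  have hatb : ∀ t : ℝ, 0 ≤ t → a t = b t := by
    intro t ht
    simp [hbdef, max_eq_left ht]
  have hatend : Filter.Tendsto a Filter.atTop (nhds l) := by
    apply hbtend.congr'
    filter_upwards [Filter.eventually_ge_atTop (0:ℝ)] with t ht
    exact (hatb t ht).symm
  -- show l = L
  have hlL' : l = L := by
    by_contra hne
    have hlltL : l < L := lt_of_le_of_ne hlL hne
    have ha0l : a 0 ≤ l := hb0 ▸ hble 0
    set m : ℝ := B * Real.exp (-l) * (Real.exp (a 0) - 1) * (lam / B - Real.exp l) with hmdef
    have hm : 0 < m := by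
      apply mul_pos
      apply mul_pos
      · exact mul_pos hB (Real.exp_pos _)
      · have : (1:ℝ) < Real.exp (a 0) := by simpa using Real.exp_lt_exp.2 ha0.1
        linarith
      · have : Real.exp l < lam / B := by rw [← hexpL]; exact Real.exp_lt_exp.2 hlltL
        linarith
    have hflow : ∀ x, a 0 ≤ x → x ≤ l → m ≤ f x := by
      intro x h1 h2
      rw [hprod, hmdef]
      have e1 : Real.exp (-l) ≤ Real.exp (-x) := Real.exp_le_exp.2 (by linarith)
      have e2 : Real.exp (a 0) ≤ Real.exp x := Real.exp_le_exp.2 h1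
      have e3 : Real.exp x ≤ Real.exp l := Real.exp_le_exp.2 h2
      have e4 : (1:ℝ) < Real.exp (a 0) := by simpa using Real.exp_lt_exp.2 ha0.1
      have e5 : Real.exp l < lam / B := by rw [← hexpL]; exact Real.exp_lt_exp.2 hlltL
      have e6 := (Real.exp_pos (-l)).le
      have e7 := (Real.exp_pos (-x)).le
      have e8 : 0 < Real.exp x - 1 := by linarith
      have e9 : 0 < B * Real.exp (-x) * (Real.exp x - 1) :=
        mul_pos (mul_pos hB (Real.exp_pos (-x))) e8
      gcongr <;> linarith
    have hatle : ∀ t : ℝ, 0 ≤ t → a t ≤ l := fun t ht => (hatb t ht) ▸ hble t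
    have hatge : ∀ t : ℝ, 0 ≤ t → a 0 ≤ a t := fun t ht =>
      hmono.monotoneOn (Set.self_mem_Ici) ht ht
    -- g t = a t - m * t is monotone on Ici 0
    set g : ℝ → ℝ := fun t => a t - m * t with hgdef
    have hgderiv : ∀ u, 0 ≤ u → HasDerivAt g (f (a u) - m) u := by
      intro u hu
      have : HasDerivAt (fun t : ℝ => m * t) m u := by
        simpa using (hasDerivAt_id u).const_mul m
      exact (ha u hu).sub this
    have hgmono : MonotoneOn g (Set.Ici 0) := by
      apply monotoneOn_of_deriv_nonneg (convex_Ici 0)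
      · intro u hu
        exact (hgderiv u hu).continuousAt.continuousWithinAt
      · intro u hu
        rw [interior_Ici] at hu
        exact ((hgderiv u hu.le).differentiableAt).differentiableWithinAt
      · intro u hu
        rw [interior_Ici] at hu
        rw [(hgderiv u hu.le).deriv]
        have := hflow (a u) (hatge u hu.le) (hatle u hu.le)
        linarith
    set T : ℝ := (l - a 0) / m + 1 with hTdef
    have hT0 : 0 ≤ T := by
      have : 0 ≤ (l - a 0) / m := div_nonneg (by linarith) hm.le
      rw [hTdef]; linarith
    have := hgmono (Set.self_mem_Ici) (Set.mem_Ici.2 hT0) hT0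
    simp only [hgdef, mul_zero, sub_zero] at this
    have hmT : m * T = (l - a 0) + m := by
      rw [hTdef, mul_add, mul_one, mul_div_cancel₀]
      exact hm.ne'
    have haT : l + m ≤ a T := by linarith [this, hmT]
    linarith [hatle T hT0]
  rw [← hlL']
  exact hatend
end

section
/- Let X be a Polish space and φ₂ : X → ℝ a continuous function with φ₂ ≥ 1 such that φ₂^{-1}([0,u]) is compact for every u ≥ 0. Let S be a bounded positive linear operator on C_b(X), and suppose there are constants c₁ > γ > 0 and D > 0 with S(1) ≥ c₁ pointwise and Sψ ≤ γ·φ₂ + D pointwise for every ψ ∈ C_b(X) with 0 ≤ ψ ≤ φ₂. Let K be a real number with K > D/(c₁ − γ), and let ν be a Borel probability measure on X such that ∫ ψ dν ≤ K for every ψ ∈ C_b(X) with 0 ≤ ψ ≤ φ₂. Then ∫ S(1) dν ≥ c₁, and for every ψ ∈ C_b(X) with 0 ≤ ψ ≤ φ₂ one has ∫ Sψ dν ≤ γ·K + D ≤ K·∫ S(1) dν. -/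
open MeasureTheory BoundedContinuousFunction

/-- The key invariance step in the proof of Theorem 4.2 of the paper: under the
Lyapunov bounds `S(1) ≥ c₁` and `Sψ ≤ γ φ₂ + D` (for `0 ≤ ψ ≤ φ₂`, `c₁ > γ > 0`,
`D > 0`), if `K > D/(c₁ - γ)` and `ν` is a Borel probability measure with
`∫ ψ dν ≤ K` for all test functions `0 ≤ ψ ≤ φ₂`, then `∫ S(1) dν ≥ c₁` and
`∫ Sψ dν ≤ γK + D ≤ K ∫ S(1) dν` for all such `ψ`. -/
theorem invariance_step {X : Type*} [TopologicalSpace X]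
    [PolishSpace X] [MeasurableSpace X] [BorelSpace X]
    (φ₂ : X → ℝ) (hφcont : Continuous φ₂) (hφge : ∀ x, 1 ≤ φ₂ x)
    (hφcomp : ∀ u : ℝ, 0 ≤ u → IsCompact (φ₂ ⁻¹' Set.Icc 0 u))
    (S : (X →ᵇ ℝ) →L[ℝ] (X →ᵇ ℝ))
    (hSpos : ∀ f : X →ᵇ ℝ, (∀ x, 0 ≤ f x) → ∀ x, 0 ≤ S f x)
    (c₁ γ D : ℝ) (hγ : 0 < γ) (hγc₁ : γ < c₁) (hD : 0 < D)
    (hS1 : ∀ x, c₁ ≤ S 1 x)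
    (hSψ : ∀ ψ : X →ᵇ ℝ, (∀ x, 0 ≤ ψ x) → (∀ x, ψ x ≤ φ₂ x) →
      ∀ x, S ψ x ≤ γ * φ₂ x + D)
    (K : ℝ) (hK : D / (c₁ - γ) < K)
    (ν : Measure X) (hν : IsProbabilityMeasure ν)
    (hνK : ∀ ψ : X →ᵇ ℝ, (∀ x, 0 ≤ ψ x) → (∀ x, ψ x ≤ φ₂ x) → ∫ x, ψ x ∂ν ≤ K) :
    c₁ ≤ ∫ x, S 1 x ∂ν ∧
    (∀ ψ : X →ᵇ ℝ, (∀ x, 0 ≤ ψ x) → (∀ x, ψ x ≤ φ₂ x) →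
      ∫ x, S ψ x ∂ν ≤ γ * K + D) ∧
    γ * K + D ≤ K * ∫ x, S 1 x ∂ν := by
  have hK0 : 0 < K := lt_trans (div_pos hD (by linarith)) hK
  have hDK : D < K * (c₁ - γ) := by
    rw [div_lt_iff₀ (by linarith)] at hK; linarith [hK]
  have h1 : c₁ ≤ ∫ x, S 1 x ∂ν := by
    calc c₁ = ∫ _x, c₁ ∂ν := by simp
    _ ≤ ∫ x, S 1 x ∂ν :=
      integral_mono (integrable_const c₁) ((S 1).integrable ν) hS1
  refine ⟨h1, fun ψ hψ0 hψφ => ?_, ?_⟩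
  · set M : ℝ := ‖S ψ‖ / γ with hM
    have hM0 : 0 ≤ M := by positivity
    set χ : X →ᵇ ℝ := BoundedContinuousFunction.ofNormedAddCommGroup
      (fun x => min (φ₂ x) M) (hφcont.min continuous_const) M
      (fun x => by
        rw [Real.norm_eq_abs, abs_le]
        constructor
        · have := hφge x; have : (0:ℝ) ≤ min (φ₂ x) M := le_min (by linarith) hM0
          linarith
        · exact min_le_right _ _) with hχ
    have hχ0 : ∀ x, 0 ≤ χ x := fun x => le_min (by linarith [hφge x]) hM0
    have hχφ : ∀ x, χ x ≤ φ₂ x := fun x => min_le_left _ _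
    have hbound : ∀ x, S ψ x ≤ γ * χ x + D := by
      intro x
      rcases le_total (φ₂ x) M with h | h
      · have : χ x = φ₂ x := min_eq_left h
        rw [this]; exact hSψ ψ hψ0 hψφ x
      · have hχx : χ x = M := min_eq_right h
        have : S ψ x ≤ ‖S ψ‖ := le_trans (le_abs_self _) ((S ψ).norm_coe_le_norm x)
        rw [hχx, hM, mul_div_cancel₀ _ (ne_of_gt hγ)]
        linarith
    calc ∫ x, S ψ x ∂ν ≤ ∫ x, (γ * χ x + D) ∂ν :=
          integral_mono ((S ψ).integrable ν)
            (((χ.integrable ν).const_mul γ).add (integrable_const D)) hbound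
    _ = γ * ∫ x, χ x ∂ν + D := by
        rw [integral_add ((χ.integrable ν).const_mul γ) (integrable_const D),
          integral_const_mul]; simp
    _ ≤ γ * K + D := by
        have := hνK χ hχ0 hχφ
        nlinarith
  · nlinarith
end
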